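/- Let X, X̂ ∈ ℝ^{I₁×⋯×I_d} be two d-mode tensors and for each k = 1,…,d let A^{(k)} be a real I_k × r_k matrix with orthonormal columns, so that P_k = A^{(k)}A^{(k)ᵀ} is an orthogonal projection on ℝ^{I_k}. Then ‖X − X̂ ×₁ P₁ ×₂ P₂ ⋯ ×_d P_d‖ ≤ ‖X − X̂ ×_d P_d‖ + ‖X̂ − X̂ ×₁ P₁ ×₂ ⋯ ×_{d−1} P_{d−1}‖. -/

import Mathlib

/-!
Split off the last mode: with `Y = X̂ ×₁ P₁ ⋯ ×_{d−1} P_{d−1}` we have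
`X − Y ×_d P_d = (X − X̂ ×_d P_d) + (X̂ − Y) ×_d P_d`. After the triangle inequality it remains to
see that `×_d P_d` does not increase the norm. Along mode `d` a tensor is a matrix whose columns
are its mode-`d` fibres, and `×_d P_d` multiplies each fibre by `P_d`; since `P_d = A Aᵀ` with
`AᵀA = 1`, its `ℓ²` operator norm is at most `‖A‖² = ‖AᵀA‖ ≤ 1` by the C⋆-identity.
-/

open Matrix MeasureTheory ProbabilityTheory
open scoped BigOperators ENNReal

noncomputable section

/-- The Frobenius norm of a real matrix. -/
def frobNorm {m n : Type*} [Fintype m] [Fintype n] (A : Matrix m n ℝ) : ℝ :=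
  Real.sqrt (∑ i, ∑ j, (A i j) ^ 2)

/-- `B` is a best rank-`k` approximation of `A` in Frobenius norm. -/
def IsBestRankApprox {m n : Type*} [Fintype m] [Fintype n]
    (A B : Matrix m n ℝ) (k : ℕ) : Prop :=
  B.rank ≤ k ∧ ∀ C : Matrix m n ℝ, C.rank ≤ k → frobNorm (A - B) ≤ frobNorm (A - C)

/-- A `d`-mode real tensor of size `I 0 × ⋯ × I (d-1)`. -/
abbrev Tensor (d : ℕ) (I : Fin d → ℕ) : Type := (∀ i : Fin d, Fin (I i)) → ℝ

/-- The Frobenius-type norm of a tensor. -/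
def tnorm {d : ℕ} {I : Fin d → ℕ} (X : Tensor d I) : ℝ :=
  Real.sqrt (∑ idx, (X idx) ^ 2)

/-- The mode-`n` product of a tensor with a square `I n × I n` matrix. -/
def modeProd {d : ℕ} {I : Fin d → ℕ} (X : Tensor d I) (n : Fin d)
    (M : Matrix (Fin (I n)) (Fin (I n)) ℝ) : Tensor d I :=
  fun idx => ∑ t : Fin (I n), M (idx n) t * X (Function.update idx n t)

/-- Iterated mode products `X ×_{l₁} M l₁ ×_{l₂} ⋯` along a list of modes. -/
def multiProd {d : ℕ} {I : Fin d → ℕ} (X : Tensor d I)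
    (M : ∀ k : Fin d, Matrix (Fin (I k)) (Fin (I k)) ℝ) (l : List (Fin d)) : Tensor d I :=
  l.foldl (fun Y k => modeProd Y k (M k)) X

/-- The matricization of a tensor along mode `k` : an `I k × ∏_{j ≠ k} I j` matrix. -/
def matricize {d : ℕ} {I : Fin d → ℕ} (X : Tensor d I) (k : Fin d) :
    Matrix (Fin (I k)) (∀ j : {j : Fin d // j ≠ k}, Fin (I j.1)) ℝ :=
  fun a c => X (fun j => if h : j = k then Fin.cast (congrArg I h).symm a else c ⟨j, h⟩)

open scoped Matrix.Norms.L2Operator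

namespace Matrix

variable {l m n : Type*} [Fintype l] [Fintype m] [Fintype n]

theorem frobNorm_eq_sqrt_sum_norm_col_sq (B : Matrix m n ℝ) :
    frobNorm B = √(∑ j, ‖(EuclideanSpace.equiv m ℝ).symm (fun i => B i j)‖ ^ 2) := by
  simp [frobNorm, EuclideanSpace.norm_sq_eq, Finset.sum_comm (γ := m)]

theorem frobNorm_mul_le [DecidableEq l] [DecidableEq m] (M : Matrix l m ℝ) (B : Matrix m n ℝ) :
    frobNorm (M * B) ≤ ‖M‖ * frobNorm B := by
  rw [frobNorm_eq_sqrt_sum_norm_col_sq, frobNorm_eq_sqrt_sum_norm_col_sq,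
    ← Real.sqrt_sq (norm_nonneg M), ← Real.sqrt_mul (sq_nonneg _), Finset.mul_sum]
  gcongr with j
  rw [← mul_pow]
  gcongr
  exact M.l2_opNorm_mulVec ((EuclideanSpace.equiv m ℝ).symm (fun i => B i j))

theorem l2_opNorm_mul_transpose_le_one [DecidableEq m] [DecidableEq n] {A : Matrix m n ℝ}
    (hA : Aᵀ * A = 1) : ‖A * Aᵀ‖ ≤ 1 := by
  have hA_sq : ‖A‖ * ‖A‖ ≤ 1 := by
    rw [← l2_opNorm_conjTranspose_mul_self, conjTranspose_eq_transpose_of_trivial, hA,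
      cstar_norm_def, map_one]
    exact ContinuousLinearMap.norm_id_le
  calc ‖A * Aᵀ‖ ≤ ‖A‖ * ‖Aᵀ‖ := l2_opNorm_mul A Aᵀ
    _ = ‖A‖ * ‖A‖ := by rw [← conjTranspose_eq_transpose_of_trivial, l2_opNorm_conjTranspose]
    _ ≤ 1 := hA_sq

end Matrix

namespace Equiv

variable {α : Type*} [DecidableEq α] {β : α → Type*}

theorem piSplitAt_symm_apply_self (i : α) (a : β i) (c : ∀ j : {j // j ≠ i}, β j) :
    (piSplitAt i β).symm (a, c) i = a := by
  simp [piSplitAt]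

theorem piSplitAt_symm_update (i : α) (a b : β i) (c : ∀ j : {j // j ≠ i}, β j) :
    Function.update ((piSplitAt i β).symm (a, c)) i b = (piSplitAt i β).symm (b, c) := by
  funext j
  by_cases h : j = i
  · subst h; simp [piSplitAt]
  · simp [piSplitAt, h]

end Equiv

theorem List.finRange_eq_dropLast_append_last {d : ℕ} (hd : 0 < d) :
    List.finRange d = (List.finRange d).dropLast ++ [⟨d - 1, Nat.sub_lt hd Nat.one_pos⟩] := by
  obtain ⟨n, rfl⟩ := Nat.exists_eq_add_one_of_ne_zero hd.ne'
  rw [List.finRange_succ_last, List.dropLast_concat]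
  rfl

section Tensor

variable {d : ℕ} {I : Fin d → ℕ}

theorem matricize_apply (X : Tensor d I) (k : Fin d) (a : Fin (I k))
    (c : ∀ j : {j : Fin d // j ≠ k}, Fin (I j.1)) :
    matricize X k a c = X ((Equiv.piSplitAt k _).symm (a, c)) := by
  unfold matricize
  congr 1
  funext j
  by_cases h : j = k
  · subst h; simp [Equiv.piSplitAt]
  · simp [Equiv.piSplitAt, h]

theorem tnorm_nonneg (X : Tensor d I) : 0 ≤ tnorm X :=
  Real.sqrt_nonneg _

theorem tnorm_add_le (X Y : Tensor d I) : tnorm (X + Y) ≤ tnorm X + tnorm Y := by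
  have h : ∀ Z : Tensor d I, tnorm Z = ‖WithLp.toLp 2 Z‖ := by
    simp [tnorm, EuclideanSpace.norm_eq]
  simpa only [h, WithLp.toLp_add] using norm_add_le _ _

theorem tnorm_eq_frobNorm_matricize (X : Tensor d I) (k : Fin d) :
    tnorm X = frobNorm (matricize X k) := by
  simp only [tnorm, frobNorm, matricize_apply]
  rw [← Fintype.sum_prod_type', Equiv.sum_comp (Equiv.piSplitAt k _).symm (fun x => X x ^ 2)]

theorem matricize_modeProd (X : Tensor d I) (k : Fin d) (M : Matrix (Fin (I k)) (Fin (I k)) ℝ) :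
    matricize (modeProd X k M) k = M * matricize X k := by
  ext a c
  simp only [matricize_apply, modeProd, Matrix.mul_apply, Equiv.piSplitAt_symm_update,
    Equiv.piSplitAt_symm_apply_self]

theorem tnorm_modeProd_le (X : Tensor d I) (k : Fin d) (M : Matrix (Fin (I k)) (Fin (I k)) ℝ) :
    tnorm (modeProd X k M) ≤ ‖M‖ * tnorm X := by
  rw [tnorm_eq_frobNorm_matricize _ k, tnorm_eq_frobNorm_matricize _ k, matricize_modeProd]
  exact M.frobNorm_mul_le _

theorem modeProd_sub (X Y : Tensor d I) (k : Fin d) (M : Matrix (Fin (I k)) (Fin (I k)) ℝ) :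
    modeProd (X - Y) k M = modeProd X k M - modeProd Y k M := by
  funext idx
  simp [modeProd, mul_sub, Finset.sum_sub_distrib]

theorem multiProd_append_singleton (X : Tensor d I)
    (M : ∀ k : Fin d, Matrix (Fin (I k)) (Fin (I k)) ℝ) (l : List (Fin d)) (k : Fin d) :
    multiProd X M (l ++ [k]) = modeProd (multiProd X M l) k (M k) := by
  simp [multiProd]

end Tensor

/-- for two `d`-mode tensors `X`, `X̂` and orthogonal projections
`P k = A k * (A k)ᵀ` along each mode,
`‖X − X̂ ×₁ P₁ ⋯ ×_d P_d‖ ≤ ‖X − X̂ ×_d P_d‖ + ‖X̂ − X̂ ×₁ P₁ ⋯ ×_{d−1} P_{d−1}‖`. -/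
theorem statement6 {d : ℕ} (hd : 0 < d) {I : Fin d → ℕ} (X Xhat : Tensor d I)
    (r : Fin d → ℕ) (A : ∀ k : Fin d, Matrix (Fin (I k)) (Fin (r k)) ℝ)
    (hA : ∀ k, (A k)ᵀ * A k = 1) :
    tnorm (X - multiProd Xhat (fun k => A k * (A k)ᵀ) (List.finRange d)) ≤
      tnorm (X - modeProd Xhat ⟨d - 1, Nat.sub_lt hd Nat.one_pos⟩
          (A ⟨d - 1, Nat.sub_lt hd Nat.one_pos⟩ * (A ⟨d - 1, Nat.sub_lt hd Nat.one_pos⟩)ᵀ)) +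
      tnorm (Xhat - multiProd Xhat (fun k => A k * (A k)ᵀ) ((List.finRange d).dropLast)) := by
  set last : Fin d := ⟨d - 1, Nat.sub_lt hd Nat.one_pos⟩
  set P : ∀ k : Fin d, Matrix (Fin (I k)) (Fin (I k)) ℝ := fun k => A k * (A k)ᵀ
  set Y := multiProd Xhat P (List.finRange d).dropLast
  have hsplit : multiProd Xhat P (List.finRange d) = modeProd Y last (P last) := by
    rw [← multiProd_append_singleton, ← List.finRange_eq_dropLast_append_last hd]
  have hcontract : tnorm (modeProd (Xhat - Y) last (P last)) ≤ tnorm (Xhat - Y) :=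
    (tnorm_modeProd_le _ _ _).trans <|
      mul_le_of_le_one_left (tnorm_nonneg _) (Matrix.l2_opNorm_mul_transpose_le_one (hA last))
  calc tnorm (X - multiProd Xhat P (List.finRange d))
      = tnorm ((X - modeProd Xhat last (P last)) + modeProd (Xhat - Y) last (P last)) := by
        rw [hsplit, modeProd_sub]; abel_nf
    _ ≤ tnorm (X - modeProd Xhat last (P last)) + tnorm (modeProd (Xhat - Y) last (P last)) :=
        tnorm_add_le _ _
    _ ≤ tnorm (X - modeProd Xhat last (P last)) + tnorm (Xhat - Y) := by gcongr

end
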